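/- arXiv:1904.10765 — 4 statements merged into one kernel-verified Lean document; each statement's English description precedes it below -/
import Mathlib

section
/- Let L ⊂ ℝ² be a centrally symmetric convex body equipartitioned by the standard basis (±e₁, ±e₂ ∈ ∂L, each quadrant has area |L|/4). If a = (a₁, a₂) ∈ L with a₁, a₂ ≥ 0, then |a₁ − a₂| ≤ 1. -/
open MeasureTheory
open scoped RealInnerProductSpace

/-!
If, say, `a₀ > 1 + a₁`, the convex combination of `a` and `-e₁` that kills the second coordinate
is `(a₀ / (1 + a₁)) • e₀ ∈ L` with `a₀ / (1 + a₁) > 1`. Since `0` is an interior point of the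
symmetric convex body, `e₀` then lies strictly between `0` and a point of `L`, hence in the
interior of `L`, contradicting `e₀ ∈ ∂L`.
-/

section Convex

variable {E : Type*} [AddCommGroup E] [Module ℝ E] [TopologicalSpace E]
  [IsTopologicalAddGroup E] [ContinuousSMul ℝ E] {L : Set E}

theorem Convex.zero_mem_interior_of_neg_mem (hL : Convex ℝ L) (hneg : ∀ x ∈ L, -x ∈ L)
    (hint : (interior L).Nonempty) : (0 : E) ∈ interior L := by
  obtain ⟨z, hz⟩ := hint
  simpa using hL.combo_interior_self_mem_interior hz (hneg z (interior_subset hz))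
    (by norm_num : (0 : ℝ) < 1 / 2) (by norm_num : (0 : ℝ) ≤ 1 / 2) (by norm_num)

theorem Convex.smul_mem_interior (hL : Convex ℝ L) (h0 : (0 : E) ∈ interior L) {x : E}
    (hx : x ∈ L) {c : ℝ} (hc0 : 0 ≤ c) (hc1 : c < 1) : c • x ∈ interior L := by
  simpa using hL.combo_interior_self_mem_interior h0 hx (sub_pos.mpr hc1) hc0 (by ring)

theorem Convex.mem_interior_of_smul_add_smul_mem (hL : Convex ℝ L) (h0 : (0 : E) ∈ interior L)
    {u v : E} (hv : -v ∈ L) {α β : ℝ} (hβ : 0 ≤ β) (hαβ : 1 + β < α)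
    (ha : α • u + β • v ∈ L) : u ∈ interior L := by
  have hβ1 : 0 < 1 + β := by linarith
  have hcomb : (α / (1 + β)) • u ∈ L := by
    convert hL ha hv (by positivity : 0 ≤ 1 / (1 + β)) (by positivity : 0 ≤ β / (1 + β))
      (by field_simp) using 1
    module
  have hα : 0 < α := by linarith
  convert hL.smul_mem_interior h0 hcomb (by positivity) ((div_lt_one hα).mpr hαβ) using 1
  rw [smul_smul, div_mul_div_comm, mul_comm, div_self (by positivity), one_smul]

end Convex

theorem EuclideanSpace.eq_smul_single_add_smul_single (a : EuclideanSpace ℝ (Fin 2)) :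
    a = a 0 • EuclideanSpace.single 0 1 + a 1 • EuclideanSpace.single 1 1 := by
  ext i
  fin_cases i <;> simp

theorem equipartitioned_planar_coord_bound_general (L : Set (EuclideanSpace ℝ (Fin 2)))
    (hLcomp : IsCompact L) (hLconv : Convex ℝ L) (hLsymm : L = -L)
    (hLint : (interior L).Nonempty)
    (he : ∀ i : Fin 2, EuclideanSpace.single i (1 : ℝ) ∈ frontier L)
    (a : EuclideanSpace ℝ (Fin 2)) (ha : a ∈ L) (ha0 : 0 ≤ a 0) (ha1 : 0 ≤ a 1) :
    |a 0 - a 1| ≤ 1 := by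
  have hneg : ∀ x ∈ L, -x ∈ L := fun x hx => by rwa [hLsymm] at hx
  have h0 := hLconv.zero_mem_interior_of_neg_mem hneg hLint
  have he_mem i : -EuclideanSpace.single i (1 : ℝ) ∈ L :=
    hneg _ (hLcomp.isClosed.frontier_subset (he i))
  have he_not_int i : EuclideanSpace.single i (1 : ℝ) ∉ interior L :=
    ((hLcomp.isClosed.frontier_eq ▸ he i) : _ ∈ L \ interior L).2
  rw [abs_le]
  constructor
  · by_contra! h
    rw [EuclideanSpace.eq_smul_single_add_smul_single a, add_comm] at ha
    exact he_not_int 1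
      (hLconv.mem_interior_of_smul_add_smul_mem h0 (he_mem 0) ha0 (by linarith) ha)
  · by_contra! h
    rw [EuclideanSpace.eq_smul_single_add_smul_single a] at ha
    exact he_not_int 0
      (hLconv.mem_interior_of_smul_add_smul_mem h0 (he_mem 1) ha1 (by linarith) ha)

/-- If a planar symmetric convex body `L` is equipartitioned by the standard basis, then every
point `a ∈ L` in the positive quadrant satisfies `|a₁ - a₂| ≤ 1`. -/
theorem equipartitioned_planar_coord_bound (L : Set (EuclideanSpace ℝ (Fin 2)))
    (hLcomp : IsCompact L) (hLconv : Convex ℝ L) (hLsymm : L = -L)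
    (hLint : (interior L).Nonempty)
    (he : ∀ i : Fin 2, EuclideanSpace.single i (1 : ℝ) ∈ frontier L)
    (hquad : ∀ σ : Fin 2 → Bool,
      volume (L ∩ {x | ∀ i, 0 ≤ (if σ i then (1 : ℝ) else -1) * x i}) = volume L / 4)
    (a : EuclideanSpace ℝ (Fin 2)) (ha : a ∈ L) (ha0 : 0 ≤ a 0) (ha1 : 0 ≤ a 1) :
    |a 0 - a 1| ≤ 1 :=
  equipartitioned_planar_coord_bound_general L hLcomp hLconv hLsymm hLint he a ha ha0 ha1
end

section
/- Let K be a convex body in ℝ³. If the open segment (p₁, p₂) and the closed segment [p₃, p₄] are contained in ∂K and (p₁,p₂) ∩ [p₃,p₄] ≠ ∅, then there is a supporting plane H of K with conv(p₁, p₂, p₃, p₄) ⊆ H ∩ K ⊆ ∂K. -/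
open MeasureTheory
open scoped RealInnerProductSpace

/-- If an open segment `(p₁,p₂)` and a closed segment `[p₃,p₄]` both lie on the boundary of a
convex body `K ⊂ ℝ³` and intersect, then some supporting plane `H` of `K` contains
`conv(p₁,p₂,p₃,p₄)`, and `H ∩ K ⊆ ∂K`. -/
theorem segments_in_boundary_supporting_plane (K : Set (EuclideanSpace ℝ (Fin 3)))
    (hKcomp : IsCompact K) (hKconv : Convex ℝ K) (hKint : (interior K).Nonempty)
    (p₁ p₂ p₃ p₄ : EuclideanSpace ℝ (Fin 3))
    (h12 : openSegment ℝ p₁ p₂ ⊆ frontier K)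
    (h34 : segment ℝ p₃ p₄ ⊆ frontier K)
    (hmeet : (openSegment ℝ p₁ p₂ ∩ segment ℝ p₃ p₄).Nonempty) :
    ∃ (f : EuclideanSpace ℝ (Fin 3) →ₗ[ℝ] ℝ) (c : ℝ), f ≠ 0 ∧
      (∀ x ∈ K, f x ≤ c) ∧
      convexHull ℝ {p₁, p₂, p₃, p₄} ⊆ {x | f x = c} ∩ K ∧
      {x | f x = c} ∩ K ⊆ frontier K := by
  have hKclosed : IsClosed K := hKcomp.isClosed
  have hfrK : frontier K ⊆ K := by
    rw [hKclosed.frontier_eq]; exact Set.diff_subset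
  -- the closed segment [p₁,p₂] is also in the frontier
  have h12' : segment ℝ p₁ p₂ ⊆ frontier K := by
    rw [← closure_openSegment]
    calc closure (openSegment ℝ p₁ p₂) ⊆ closure (frontier K) := closure_mono h12
    _ = frontier K := isClosed_frontier.closure_eq
  have hp1K : p₁ ∈ K := hfrK (h12' (left_mem_segment ℝ p₁ p₂))
  have hp2K : p₂ ∈ K := hfrK (h12' (right_mem_segment ℝ p₁ p₂))
  have hp3K : p₃ ∈ K := hfrK (h34 (left_mem_segment ℝ p₃ p₄))
  have hp4K : p₄ ∈ K := hfrK (h34 (right_mem_segment ℝ p₃ p₄))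
  obtain ⟨x₀, hx12, hx34⟩ := hmeet
  obtain ⟨s, t, hs, ht, hst, hx⟩ := hx12
  -- the point w : midpoint of x₀ and the midpoint of p₃p₄; it lies in [p₃,p₄] ⊆ ∂K
  set m : EuclideanSpace ℝ (Fin 3) := (2⁻¹ : ℝ) • p₃ + (2⁻¹ : ℝ) • p₄ with hm
  have hmseg : m ∈ segment ℝ p₃ p₄ := ⟨2⁻¹, 2⁻¹, by norm_num, by norm_num, by norm_num, rfl⟩
  set w : EuclideanSpace ℝ (Fin 3) := (2⁻¹ : ℝ) • x₀ + (2⁻¹ : ℝ) • m with hw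
  have hwseg : w ∈ segment ℝ p₃ p₄ :=
    (convex_segment p₃ p₄) hx34 hmseg (by norm_num) (by norm_num) (by norm_num)
  have hwfr : w ∈ frontier K := h34 hwseg
  have hwK : w ∈ K := hfrK hwfr
  have hwnotint : w ∉ interior K := by
    rw [hKclosed.frontier_eq] at hwfr
    exact hwfr.2
  -- supporting hyperplane at w
  obtain ⟨f, hf⟩ := geometric_hahn_banach_open_point hKconv.interior isOpen_interior hwnotint
  obtain ⟨y, hy⟩ := hKint
  -- every point of K satisfies f x ≤ f w
  have hle : ∀ x ∈ K, f x ≤ f w := by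
    intro x hxK
    have hxcl : x ∈ closure (interior K) := by
      have hseg : openSegment ℝ y x ⊆ interior K :=
        hKconv.openSegment_interior_self_subset_interior hy hxK
      have hx' : x ∈ closure (openSegment ℝ y x) := by
        rw [closure_openSegment]; exact right_mem_segment ℝ y x
      exact closure_mono hseg hx'
    have hclosed : IsClosed {z | f z ≤ f w} := isClosed_le f.continuous continuous_const
    exact (hclosed.closure_subset_iff.2 fun z hz => (hf z hz).le) hxcl
  have h1 : f p₁ ≤ f w := hle p₁ hp1K
  have h2 : f p₂ ≤ f w := hle p₂ hp2K
  have h3 : f p₃ ≤ f w := hle p₃ hp3K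
  have h4 : f p₄ ≤ f w := hle p₄ hp4K
  -- the barycentric expression for f w
  have hfx₀ : f x₀ = s * f p₁ + t * f p₂ := by
    rw [← hx]
    simp only [map_add, ContinuousLinearMap.map_smul, smul_eq_mul]
  have hfw4 : 4 * f w = 2 * s * f p₁ + 2 * t * f p₂ + f p₃ + f p₄ := by
    have : f w = 2⁻¹ * f x₀ + 2⁻¹ * (2⁻¹ * f p₃ + 2⁻¹ * f p₄) := by
      rw [hw, hm]
      simp only [map_add, ContinuousLinearMap.map_smul, smul_eq_mul]
    rw [this, hfx₀]; ring
  have haux1 : s * f w + t * f w = f w := by rw [← add_mul, hst, one_mul]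
  have hmul1 : s * f p₁ ≤ s * f w := mul_le_mul_of_nonneg_left h1 hs.le
  have hmul2 : t * f p₂ ≤ t * f w := mul_le_mul_of_nonneg_left h2 ht.le
  have e1 : f p₁ = f w := by
    refine le_antisymm h1 ?_
    by_contra hcon
    push_neg at hcon
    have := mul_lt_mul_of_pos_left hcon hs
    linarith
  have e2 : f p₂ = f w := by
    refine le_antisymm h2 ?_
    by_contra hcon
    push_neg at hcon
    have := mul_lt_mul_of_pos_left hcon ht
    linarith
  have e3 : f p₃ = f w := by
    refine le_antisymm h3 ?_
    linarith
  have e4 : f p₄ = f w := by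
    refine le_antisymm h4 ?_
    linarith
  refine ⟨f.toLinearMap, f w, ?_, hle, ?_, ?_⟩
  · intro h0
    have hy0 : f y = 0 := congrFun (congrArg DFunLike.coe h0) y
    have hw0 : f w = 0 := congrFun (congrArg DFunLike.coe h0) w
    have := hf y hy
    rw [hy0, hw0] at this
    exact lt_irrefl 0 this
  · -- all four points lie on the hyperplane slice
    have hconvtgt : Convex ℝ ({x | f.toLinearMap x = f w} ∩ K) :=
      (convex_hyperplane f.toLinearMap.isLinear (f w)).inter hKconv
    apply convexHull_min _ hconvtgt
    intro x hxmem
    simp only [Set.mem_insert_iff, Set.mem_singleton_iff] at hxmem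
    rcases hxmem with rfl | rfl | rfl | rfl
    · exact ⟨e1, hp1K⟩
    · exact ⟨e2, hp2K⟩
    · exact ⟨e3, hp3K⟩
    · exact ⟨e4, hp4K⟩
  · -- the slice is in the frontier
    rintro x ⟨hxf, hxK⟩
    rw [hKclosed.frontier_eq]
    refine ⟨hxK, fun hxint => ?_⟩
    have hlt := hf x hxint
    have hxeq : f x = f w := hxf
    rw [hxeq] at hlt
    exact lt_irrefl _ hlt
end

section
/- Let K ⊂ ℝ³ be a centrally symmetric convex body equipartitioned by the standard orthonormal basis, and let R = max_{a ∈ K} ‖a‖₁. Then for every octant ω ∈ {−1,1}³, there exists a point a ∈ K(ω) (the intersection of K with the ω-octant) with ‖a‖₁ ≥ R^{1/3}. -/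
/-!
Let `a ∈ K` realise `R` and let `m` maximise `‖·‖₁` on `K(σ)`, with `M = ‖m‖₁`. After flipping
signs so that octants become the positive orthant, `K(σ)` lies in `M • Δ`, where `Δ` is the corner
simplex, so `|K(σ)| ≤ M³ |Δ|`. The octant piece containing `a` contains `0`, the three signed unit
vectors and `a`; when `R > 1` their convex hull is `Δ` together with the simplex with vertices the
unit vectors and `a`, of volume `(R - 1) |Δ|`, on the other side of the plane `∑ xᵢ = 1`. Hence that
piece has volume at least `R |Δ|`, and equipartition gives `R ≤ M³`.
-/

open MeasureTheory
open scoped RealInnerProductSpace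

namespace OctantVolume

open Set
open scoped Pointwise

section CornerSimplex

variable {ι : Type*} [Fintype ι]

def cornerSimplex (ι : Type*) [Fintype ι] : Set (EuclideanSpace ℝ ι) :=
  {x | (∀ i, 0 ≤ x i) ∧ ∑ i, x i ≤ 1}

theorem isClosed_cornerSimplex : IsClosed (cornerSimplex ι) := by
  simp only [cornerSimplex, ofPred_and, ofPred_forall]
  exact (isClosed_iInter fun i => isClosed_le continuous_const (by fun_prop)).inter
    (isClosed_le (by fun_prop) continuous_const)

theorem cornerSimplex_subset_closedBall : cornerSimplex ι ⊆ Metric.closedBall 0 1 := by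
  rintro x ⟨hx₀, hx₁⟩
  have hx_le_one (i : ι) : x i ≤ 1 :=
    (Finset.single_le_sum (fun j _ => hx₀ j) (Finset.mem_univ i)).trans hx₁
  rw [mem_closedBall_zero_iff, ← sq_le_one_iff₀ (norm_nonneg x), EuclideanSpace.norm_sq_eq]
  calc ∑ i, ‖x i‖ ^ 2 ≤ ∑ i, x i := Finset.sum_le_sum fun i _ => by
        rw [Real.norm_eq_abs, sq_abs]; nlinarith [hx₀ i, hx_le_one i]
    _ ≤ 1 := hx₁

theorem volume_cornerSimplex_ne_top : volume (cornerSimplex ι) ≠ ⊤ :=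
  (measure_mono cornerSimplex_subset_closedBall).trans_lt measure_closedBall_lt_top |>.ne

theorem volume_cornerSimplex_pos : 0 < volume (cornerSimplex ι) := by
  set c : ℝ := 1 / (2 * Fintype.card ι + 2)
  have hc : 0 < c := by positivity
  refine (Metric.measure_ball_pos volume (WithLp.toLp 2 fun _ => c) hc).trans_le
    (measure_mono fun x hx => ?_)
  have hxc (i : ι) : |x i - c| < c := by
    have := (PiLp.dist_apply_le x (WithLp.toLp 2 fun _ => c) i).trans_lt hx
    rwa [Real.dist_eq] at this
  refine ⟨fun i => by linarith [abs_lt.1 (hxc i)], ?_⟩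
  calc ∑ i, x i ≤ ∑ _ : ι, 2 * c :=
        Finset.sum_le_sum fun i _ => by linarith [abs_lt.1 (hxc i)]
    _ ≤ 1 := by
      rw [Finset.sum_const, Finset.card_univ, nsmul_eq_mul]
      simp only [c]
      field_simp
      linarith

theorem volume_le_ofReal_pow_mul_volume_cornerSimplex {C : Set (EuclideanSpace ℝ ι)} {M : ℝ}
    (hM : 0 ≤ M) (hC : ∀ x ∈ C, (∀ i, 0 ≤ x i) ∧ ∑ i, x i ≤ M) :
    volume C ≤ ENNReal.ofReal (M ^ Fintype.card ι) * volume (cornerSimplex ι) := by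
  have hCM : C ⊆ M • cornerSimplex ι := fun x hx => by
    obtain ⟨hx₀, hx₁⟩ := hC x hx
    rcases hM.eq_or_lt with rfl | hM
    · obtain rfl : x = 0 := by
        ext i
        exact (Finset.sum_eq_zero_iff_of_nonneg fun i _ => hx₀ i).1
          (le_antisymm hx₁ (Finset.sum_nonneg fun i _ => hx₀ i)) i (Finset.mem_univ i)
      exact zero_mem_smul_set ⟨fun _ => le_rfl, by simp⟩
    rw [mem_smul_set_iff_inv_smul_mem₀ hM.ne']
    refine ⟨fun i => ?_, ?_⟩
    · simpa using mul_nonneg (inv_nonneg.2 hM.le) (hx₀ i)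
    · simpa [← Finset.mul_sum] using inv_mul_le_one_of_le₀ hx₁ hM.le
  calc volume C ≤ volume (M • cornerSimplex ι) := measure_mono hCM
    _ = _ := by
      rw [Measure.addHaar_smul, finrank_euclideanSpace, abs_of_nonneg (by positivity)]

end CornerSimplex

theorem _root_.Convex.add_sum_smul_sub_mem {ι E : Type*} [Fintype ι] [AddCommGroup E]
    [Module ℝ E] {C : Set E} (hC : Convex ℝ C) {v₀ : E} {v : ι → E} (h₀ : v₀ ∈ C)
    (hv : ∀ i, v i ∈ C) {x : ι → ℝ} (hx₀ : ∀ i, 0 ≤ x i) (hx₁ : ∑ i, x i ≤ 1) :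
    v₀ + ∑ i, x i • (v i - v₀) ∈ C := by
  -- the convex combination `(1 - ∑ i, x i) • v₀ + ∑ i, x i • v i`, indexed by `Option ι`
  have h := hC.sum_mem (t := Finset.univ) (w := fun o : Option ι => o.elim (1 - ∑ i, x i) x)
    (z := fun o : Option ι => o.elim v₀ v) (fun o _ => by cases o <;> simp [hx₀, hx₁])
    (by simp [Fintype.sum_option]) (fun o _ => by cases o <;> simp [h₀, hv])
  convert h using 1
  simp only [Fintype.sum_option, Option.elim, smul_sub, Finset.sum_sub_distrib, ← Finset.sum_smul,
    sub_smul, one_smul]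
  abel

section Simplex

variable {ι : Type*} [Fintype ι]

def simplex (v₀ : EuclideanSpace ℝ ι) (v : ι → EuclideanSpace ℝ ι) : Set (EuclideanSpace ℝ ι) :=
  (fun x => v₀ + ∑ i, x i • (v i - v₀)) '' cornerSimplex ι

def edgeMatrix (v₀ : EuclideanSpace ℝ ι) (v : ι → EuclideanSpace ℝ ι) : Matrix ι ι ℝ :=
  Matrix.of fun i j => (v j - v₀) i

theorem simplex_subset {C : Set (EuclideanSpace ℝ ι)} (hC : Convex ℝ C)
    {v₀ : EuclideanSpace ℝ ι} {v : ι → EuclideanSpace ℝ ι} (h₀ : v₀ ∈ C) (hv : ∀ i, v i ∈ C) :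
    simplex v₀ v ⊆ C := by
  rintro _ ⟨x, ⟨hx₀, hx₁⟩, rfl⟩
  exact hC.add_sum_smul_sub_mem h₀ hv hx₀ hx₁

theorem volume_setOf_sum_eq_one : volume {y : EuclideanSpace ℝ ι | ∑ i, y i = 1} = 0 := by
  let f : EuclideanSpace ℝ ι →ᵃ[ℝ] ℝ :=
    (∑ i, EuclideanSpace.proj i : EuclideanSpace ℝ ι →L[ℝ] ℝ).toLinearMap.toAffineMap
  have h : {y : EuclideanSpace ℝ ι | ∑ i, y i = 1} = (AffineSubspace.mk' (1 : ℝ) ⊥).comap f := by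
    ext y; simp [f, sub_eq_zero]
  rw [h]
  refine Measure.addHaar_affineSubspace _ _ fun htop => ?_
  have h0 : (0 : EuclideanSpace ℝ ι) ∈ (AffineSubspace.mk' (1 : ℝ) ⊥).comap f :=
    htop ▸ AffineSubspace.mem_top _ _ _
  simp [f] at h0

variable [DecidableEq ι]

theorem simplex_zero_single : simplex 0 (fun i => EuclideanSpace.single i 1) = cornerSimplex ι := by
  have h (x : EuclideanSpace ℝ ι) : 0 + ∑ i, x i • (EuclideanSpace.single i 1 - 0) = x := by
    simpa using (EuclideanSpace.basisFun ι ℝ).sum_repr x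
  simp only [simplex, h, image_id']

theorem volume_simplex (v₀ : EuclideanSpace ℝ ι) (v : ι → EuclideanSpace ℝ ι) :
    volume (simplex v₀ v) =
      ENNReal.ofReal |(edgeMatrix v₀ v).det| * volume (cornerSimplex ι) := by
  have h : (fun x : EuclideanSpace ℝ ι => v₀ + ∑ i, x i • (v i - v₀)) =
      (v₀ + ·) ∘ Matrix.toEuclideanLin (edgeMatrix v₀ v) := by
    ext x k
    simp [edgeMatrix, Matrix.toLpLin_apply, Matrix.mulVec, dotProduct, mul_comm]
  rw [simplex, h, image_comp, image_add_left, measure_preimage_add,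
    Measure.addHaar_image_linearMap, Matrix.toEuclideanLin_eq_toLin_orthonormal,
    LinearMap.det_toLin]

end Simplex

section ThreeSpace

local notation "𝔼³" => EuclideanSpace ℝ (Fin 3)

theorem det_edgeMatrix_single (b : 𝔼³) :
    (edgeMatrix (EuclideanSpace.single 0 1)
      ![EuclideanSpace.single 1 1, EuclideanSpace.single 2 1, b]).det = ∑ i, b i - 1 := by
  simp [edgeMatrix, Matrix.det_fin_three, Fin.sum_univ_three]
  ring

theorem ofReal_sum_mul_volume_cornerSimplex_le {C : Set 𝔼³} (hC : Convex ℝ C) (h₀ : 0 ∈ C)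
    (he : ∀ i, EuclideanSpace.single i 1 ∈ C) {b : 𝔼³} (hb : b ∈ C) :
    ENNReal.ofReal (∑ i, b i) * volume (cornerSimplex (Fin 3)) ≤ volume C := by
  have hΔ : cornerSimplex (Fin 3) ⊆ C := by
    rw [← simplex_zero_single]; exact simplex_subset hC h₀ he
  rcases le_or_gt (∑ i, b i) 1 with hb₁ | hb₁
  · calc ENNReal.ofReal (∑ i, b i) * volume (cornerSimplex (Fin 3))
        ≤ 1 * volume (cornerSimplex (Fin 3)) := by gcongr; exact ENNReal.ofReal_le_one.2 hb₁
      _ ≤ volume C := by rw [one_mul]; exact measure_mono hΔ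
  set T := simplex (EuclideanSpace.single 0 1)
    (![EuclideanSpace.single 1 1, EuclideanSpace.single 2 1, b] : Fin 3 → 𝔼³)
  have hT {D : Set 𝔼³} (hD : Convex ℝ D) (he : ∀ i, EuclideanSpace.single i 1 ∈ D)
      (hb : b ∈ D) : T ⊆ D :=
    simplex_subset hD (he 0)
      (Fin.forall_fin_succ.2 ⟨he 1, Fin.forall_fin_succ.2 ⟨he 2, by simpa⟩⟩)
  have hT₁ : T ⊆ {y | 1 ≤ ∑ i, y i} :=
    hT (convex_halfSpace_ge ⟨fun x y => by simp [Finset.sum_add_distrib],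
      fun c x => by simp [Finset.mul_sum]⟩ 1) (fun i => by simp) hb₁.le
  have hΔT : AEDisjoint volume (cornerSimplex (Fin 3)) T :=
    measure_mono_null (fun y hy => le_antisymm hy.1.2 (hT₁ hy.2)) volume_setOf_sum_eq_one
  calc ENNReal.ofReal (∑ i, b i) * volume (cornerSimplex (Fin 3))
      = volume (cornerSimplex (Fin 3)) + volume T := by
        rw [volume_simplex, det_edgeMatrix_single, abs_of_pos (sub_pos.2 hb₁), ← one_add_mul,
          ← ENNReal.ofReal_one, ← ENNReal.ofReal_add zero_le_one (sub_pos.2 hb₁).le,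
          add_sub_cancel]
    _ = volume (cornerSimplex (Fin 3) ∪ T) :=
        (measure_union₀' isClosed_cornerSimplex.measurableSet.nullMeasurableSet hΔT).symm
    _ ≤ volume C := measure_mono (union_subset hΔ (hT hC he hb))

end ThreeSpace

section FlipSigns

variable {ι : Type*} {σ : ι → Bool}

def octant (σ : ι → Bool) : Set (EuclideanSpace ℝ ι) :=
  {x | ∀ i, 0 ≤ (if σ i then (1 : ℝ) else -1) * x i}

theorem isClosed_octant : IsClosed (octant σ) := by
  simp only [octant, ofPred_forall]
  exact isClosed_iInter fun i => isClosed_le continuous_const (by fun_prop)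

theorem convex_octant : Convex ℝ (octant σ) := fun x hx y hy a b ha hb _ i => by
  have := add_nonneg (mul_nonneg ha (hx i)) (mul_nonneg hb (hy i))
  simp only [PiLp.add_apply, PiLp.smul_apply, smul_eq_mul]
  linarith

theorem zero_mem_octant : 0 ∈ octant σ := fun i => by simp

theorem mem_octant_sign (x : EuclideanSpace ℝ ι) : x ∈ octant fun i => decide (0 ≤ x i) := by
  intro i
  by_cases h : 0 ≤ x i
  · simp [h]
  · simp [h]; linarith

variable [Fintype ι]

noncomputable def flipSigns (σ : ι → Bool) : EuclideanSpace ℝ ι ≃ₗᵢ[ℝ] EuclideanSpace ℝ ι :=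
  LinearIsometryEquiv.piLpCongrRight 2 fun i => if σ i then .refl ℝ ℝ else .neg ℝ

theorem flipSigns_apply (x : EuclideanSpace ℝ ι) (i : ι) :
    flipSigns σ x i = (if σ i then 1 else -1) * x i := by
  by_cases h : σ i <;> simp [flipSigns, h]

@[simp]
theorem flipSigns_flipSigns (x : EuclideanSpace ℝ ι) : flipSigns σ (flipSigns σ x) = x := by
  ext i
  by_cases h : σ i <;> simp [flipSigns_apply, h]

theorem mem_octant_iff {x : EuclideanSpace ℝ ι} : x ∈ octant σ ↔ ∀ i, 0 ≤ flipSigns σ x i := by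
  simp only [flipSigns_apply]; rfl

theorem flipSigns_apply_of_mem_octant {x : EuclideanSpace ℝ ι} (hx : x ∈ octant σ) (i : ι) :
    flipSigns σ x i = |x i| := by
  rw [mem_octant_iff] at hx
  rw [← abs_of_nonneg (hx i), flipSigns_apply, abs_mul]
  split_ifs <;> simp

theorem volume_flipSigns_image (s : Set (EuclideanSpace ℝ ι)) :
    volume (flipSigns σ '' s) = volume s := by
  rw [LinearIsometryEquiv.image_eq_preimage_symm]
  exact (flipSigns σ).symm.measurePreserving.measure_preimage_emb
    (flipSigns σ).symm.toHomeomorph.measurableEmbedding s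

theorem single_mem_flipSigns_image_inter_octant [DecidableEq ι] {K : Set (EuclideanSpace ℝ ι)}
    {i : ι} (hpos : EuclideanSpace.single i 1 ∈ K) (hneg : -EuclideanSpace.single i 1 ∈ K) :
    EuclideanSpace.single i 1 ∈ flipSigns σ '' (K ∩ octant σ) := by
  refine ⟨flipSigns σ (EuclideanSpace.single i 1), ⟨?_, ?_⟩, flipSigns_flipSigns _⟩
  · by_cases h : σ i
    · convert hpos using 1
      ext j; by_cases hj : j = i <;> simp [flipSigns_apply, hj, h]
    · convert hneg using 1
      ext j; by_cases hj : j = i <;> simp [flipSigns_apply, hj, h]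
  · rw [mem_octant_iff, flipSigns_flipSigns]
    intro j
    by_cases h : j = i <;> simp [h]

theorem volume_le_of_subset_octant {S : Set (EuclideanSpace ℝ ι)} (hS : S ⊆ octant σ) {M : ℝ}
    (hM : 0 ≤ M) (hSM : ∀ x ∈ S, ∑ i, |x i| ≤ M) :
    volume S ≤ ENNReal.ofReal (M ^ Fintype.card ι) * volume (cornerSimplex ι) := by
  rw [← volume_flipSigns_image (σ := σ)]
  refine volume_le_ofReal_pow_mul_volume_cornerSimplex hM ?_
  rintro _ ⟨x, hx, rfl⟩
  simp only [flipSigns_apply_of_mem_octant (hS hx)]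
  exact ⟨fun i => abs_nonneg _, hSM x hx⟩

end FlipSigns

theorem ofReal_sum_abs_mul_volume_cornerSimplex_le {K : Set (EuclideanSpace ℝ (Fin 3))}
    (hK : Convex ℝ K) (h₀ : 0 ∈ K) (hpos : ∀ i, EuclideanSpace.single i 1 ∈ K)
    (hneg : ∀ i, -EuclideanSpace.single i 1 ∈ K) {b : EuclideanSpace ℝ (Fin 3)} (hb : b ∈ K) :
    ENNReal.ofReal (∑ i, |b i|) * volume (cornerSimplex (Fin 3)) ≤
      volume (K ∩ octant fun i => decide (0 ≤ b i)) := by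
  set τ : Fin 3 → Bool := fun i => decide (0 ≤ b i)
  have hbτ : b ∈ octant τ := mem_octant_sign b
  have hconv : Convex ℝ (flipSigns τ '' (K ∩ octant τ)) :=
    (hK.inter convex_octant).linear_image (flipSigns τ).toLinearEquiv.toLinearMap
  calc ENNReal.ofReal (∑ i, |b i|) * volume (cornerSimplex (Fin 3))
      = ENNReal.ofReal (∑ i, flipSigns τ b i) * volume (cornerSimplex (Fin 3)) := by
        simp only [flipSigns_apply_of_mem_octant hbτ]
    _ ≤ volume (flipSigns τ '' (K ∩ octant τ)) :=
        ofReal_sum_mul_volume_cornerSimplex_le hconv ⟨0, ⟨h₀, zero_mem_octant⟩, map_zero _⟩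
          (fun i => single_mem_flipSigns_image_inter_octant (hpos i) (hneg i))
          ⟨b, ⟨hb, hbτ⟩, rfl⟩
    _ = volume (K ∩ octant τ) := volume_flipSigns_image _

end OctantVolume

open OctantVolume

theorem equipartitioned_octant_l1_bound_general (K : Set (EuclideanSpace ℝ (Fin 3)))
    (hKcomp : IsCompact K) (hKconv : Convex ℝ K) (hKsymm : K = -K)
    (he : ∀ i : Fin 3, EuclideanSpace.single i (1 : ℝ) ∈ frontier K)
    (hoct : ∀ σ : Fin 3 → Bool,
      volume (K ∩ {x | ∀ i, 0 ≤ (if σ i then (1 : ℝ) else -1) * x i}) = volume K / 8)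
    (R : ℝ) (hRmem : ∃ a ∈ K, ∑ i, |a i| = R) :
    ∀ σ : Fin 3 → Bool, ∃ a ∈ K,
      (∀ i, 0 ≤ (if σ i then (1 : ℝ) else -1) * a i) ∧
      R ^ ((1 : ℝ) / 3) ≤ ∑ i, |a i| := by
  intro σ
  have hpos (i : Fin 3) : EuclideanSpace.single i (1 : ℝ) ∈ K :=
    hKcomp.isClosed.frontier_subset (he i)
  have hneg (i : Fin 3) : -EuclideanSpace.single i (1 : ℝ) ∈ K := by
    rw [hKsymm, Set.mem_neg, neg_neg]; exact hpos i
  have h₀ : 0 ∈ K := by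
    simpa using hKconv (hpos 0) (hneg 0) (by norm_num : (0 : ℝ) ≤ 1 / 2)
      (by norm_num : (0 : ℝ) ≤ 1 / 2) (by norm_num)
  have hl1 : Continuous fun x : EuclideanSpace ℝ (Fin 3) => ∑ i, |x i| := by fun_prop
  obtain ⟨a, ha, hmax⟩ := (hKcomp.inter_right isClosed_octant).exists_isMaxOn
    ⟨0, h₀, zero_mem_octant (σ := σ)⟩ hl1.continuousOn
  refine ⟨a, ha.1, ha.2, ?_⟩
  obtain ⟨b, hb, rfl⟩ := hRmem
  have hvol : ENNReal.ofReal (∑ i, |b i|) * volume (cornerSimplex (Fin 3)) ≤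
      ENNReal.ofReal ((∑ i, |a i|) ^ 3) * volume (cornerSimplex (Fin 3)) :=
    calc _ ≤ volume (K ∩ octant fun i => decide (0 ≤ b i)) :=
          ofReal_sum_abs_mul_volume_cornerSimplex_le hKconv h₀ hpos hneg hb
      _ = volume (K ∩ octant σ) := (hoct _).trans (hoct σ).symm
      _ ≤ _ := volume_le_of_subset_octant Set.inter_subset_right (by positivity) hmax
  rw [ENNReal.mul_le_mul_iff_left volume_cornerSimplex_pos.ne' volume_cornerSimplex_ne_top,
    ENNReal.ofReal_le_ofReal_iff (by positivity)] at hvol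
  calc (∑ i, |b i|) ^ ((1 : ℝ) / 3) ≤ ((∑ i, |a i|) ^ 3) ^ ((1 : ℝ) / 3) :=
        Real.rpow_le_rpow (by positivity) hvol (by norm_num)
    _ = ∑ i, |a i| := by
        rw [one_div]; exact_mod_cast Real.pow_rpow_inv_natCast (by positivity) three_ne_zero

/-- If `K ⊂ ℝ³` is a symmetric convex body equipartitioned by the standard orthonormal basis
and `R = max_{a ∈ K} ‖a‖₁`, then every octant of `K` contains a point of `ℓ¹`-norm at least
`R^(1/3)`. -/
theorem equipartitioned_octant_l1_bound (K : Set (EuclideanSpace ℝ (Fin 3)))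
    (hKcomp : IsCompact K) (hKconv : Convex ℝ K) (hKsymm : K = -K)
    (hKint : (interior K).Nonempty)
    (he : ∀ i : Fin 3, EuclideanSpace.single i (1 : ℝ) ∈ frontier K)
    (hoct : ∀ σ : Fin 3 → Bool,
      volume (K ∩ {x | ∀ i, 0 ≤ (if σ i then (1 : ℝ) else -1) * x i}) = volume K / 8)
    (hsec : ∀ i : Fin 3, ∀ σ : Fin 3 → Bool,
      μH[2] (K ∩ {x | x i = 0} ∩
          {x | ∀ j, j ≠ i → 0 ≤ (if σ j then (1 : ℝ) else -1) * x j}) =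
        μH[2] (K ∩ {x | x i = 0}) / 4)
    (R : ℝ) (hRmem : ∃ a ∈ K, ∑ i, |a i| = R) (hRub : ∀ a ∈ K, ∑ i, |a i| ≤ R) :
    ∀ σ : Fin 3 → Bool, ∃ a ∈ K,
      (∀ i, 0 ≤ (if σ i then (1 : ℝ) else -1) * a i) ∧
      R ^ ((1 : ℝ) / 3) ≤ ∑ i, |a i| :=
  equipartitioned_octant_l1_bound_general K hKcomp hKconv hKsymm he hoct R hRmem
end

section
/- Let K ⊂ ℝ³ be a centrally symmetric convex body and T ∈ GL(3) with B₂³ ⊆ T·B∞³ ⊆ √3·B₂³ (where B∞³ = [-1,1]³). Then T ∈ O(3), i.e., T is an orthogonal transformation. -/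
open scoped RealInnerProductSpace

/-!
Let `vᵢ = T eᵢ` be the columns of `T` and `wᵢ` the rows of `T⁻¹`, so that `⟪wᵢ, vⱼ⟫ = δᵢⱼ`.
The inclusion `B₂ ⊆ T(B∞)` says that `|⟪wᵢ, y⟫| ≤ 1` on the unit ball, i.e. `‖wᵢ‖ ≤ 1`, hence
`‖vᵢ‖ ≥ ⟪wᵢ, vᵢ⟫ = 1`. The inclusion `T(B∞) ⊆ √n B₂`, tested at a well-chosen vertex `∑ εᵢ vᵢ`,
gives `∑ ‖vᵢ‖² ≤ n`. So `‖vᵢ‖ = ‖wᵢ‖ = 1`, the equality case of Cauchy–Schwarz forces `wᵢ = vᵢ`,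
and the columns of `T` are orthonormal.
-/

open Finset Metric

section InnerProductSpace

variable {F ι : Type*} [NormedAddCommGroup F] [InnerProductSpace ℝ F]

/- Choose the signs one at a time, each making the new cross term `⟪u, ε a • v a⟫` nonnegative. -/
theorem exists_sign_sum_norm_sq_le_norm_sum_smul_sq [DecidableEq ι] (v : ι → F) (s : Finset ι) :
    ∃ ε : ι → ℝ, (∀ i, |ε i| = 1) ∧ ∑ i ∈ s, ‖v i‖ ^ 2 ≤ ‖∑ i ∈ s, ε i • v i‖ ^ 2 := by
  induction s using Finset.induction_on with
  | empty => exact ⟨fun _ => 1, by simp, by simp⟩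
  | insert a s ha ih =>
    obtain ⟨ε, hε, hle⟩ := ih
    set u := ∑ i ∈ s, ε i • v i
    obtain ⟨σ, hσ, hu⟩ : ∃ σ : ℝ, |σ| = 1 ∧ 0 ≤ σ * ⟪u, v a⟫ := by
      rcases le_total 0 ⟪u, v a⟫ with h | h
      · exact ⟨1, by simp, by simpa⟩
      · exact ⟨-1, by simp, by simpa⟩
    refine ⟨Function.update ε a σ, fun i => ?_, ?_⟩
    · by_cases hi : i = a
      · simp [hi, hσ]
      · simp [hi, hε]
    · have hs : ∑ i ∈ s, Function.update ε a σ i • v i = u :=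
        sum_congr rfl fun i hi => by rw [Function.update_of_ne (ne_of_mem_of_not_mem hi ha)]
      rw [sum_insert ha, sum_insert ha, hs, Function.update_self, add_comm (σ • v a),
        norm_add_sq_real, real_inner_smul_right, norm_smul, Real.norm_eq_abs, hσ, one_mul]
      nlinarith

theorem norm_le_one_of_forall_inner_le_one {w : F} (h : ∀ y, ‖y‖ ≤ 1 → ⟪w, y⟫ ≤ 1) :
    ‖w‖ ≤ 1 := by
  rcases eq_or_ne w 0 with rfl | hw
  · simp
  have := h (‖w‖⁻¹ • w) (norm_smul_inv_norm hw).le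
  rwa [real_inner_smul_right, real_inner_self_eq_norm_sq, sq, ← mul_assoc,
    inv_mul_cancel₀ (norm_ne_zero_iff.2 hw), one_mul] at this

theorem orthonormal_of_inner_eq_ite_of_sum_norm_sq_le_card [Fintype ι] [DecidableEq ι]
    {v w : ι → F} (hvw : ∀ i j, ⟪w i, v j⟫ = if i = j then 1 else 0) (hw : ∀ i, ‖w i‖ ≤ 1)
    (hv : ∑ i, ‖v i‖ ^ 2 ≤ Fintype.card ι) : Orthonormal ℝ v := by
  have hwv : ∀ i, ⟪w i, v i⟫ = 1 := by simp [hvw]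
  have hwv_le : ∀ i, 1 ≤ ‖w i‖ * ‖v i‖ := fun i => (hwv i).symm.le.trans (real_inner_le_norm _ _)
  have hv1 : ∀ i ∈ univ, (1 : ℝ) ≤ ‖v i‖ ^ 2 := fun i _ =>
    one_le_pow₀ <| (hwv_le i).trans <| mul_le_of_le_one_left (norm_nonneg _) (hw i)
  have hvn : ∀ i, ‖v i‖ = 1 := fun i => by
    have := (sum_eq_sum_iff_of_le hv1).1 (le_antisymm (sum_le_sum hv1) (by simpa using hv)) i
      (mem_univ i)
    exact (pow_eq_one_iff_of_nonneg (norm_nonneg _) two_ne_zero).1 this.symm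
  have hwn : ∀ i, ‖w i‖ = 1 := fun i => le_antisymm (hw i) (by simpa [hvn] using hwv_le i)
  have hwv_eq : ∀ i, w i = v i := fun i =>
    (inner_eq_one_iff_of_norm_eq_one (hwn i) (hvn i)).1 (hwv i)
  rw [orthonormal_iff_ite]
  intro i j
  rw [← hwv_eq i]
  exact hvw i j

end InnerProductSpace

def cube (ι : Type*) : Set (EuclideanSpace ℝ ι) := {x | ∀ i, |x i| ≤ 1}

section Cube

variable {ι E : Type*} [Fintype ι] [DecidableEq ι] [NormedAddCommGroup E] [InnerProductSpace ℝ E]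

theorem sum_norm_sq_map_single_le_sq (T : EuclideanSpace ℝ ι →ₗ[ℝ] E) {r : ℝ}
    (hT : ∀ x ∈ cube ι, ‖T x‖ ≤ r) :
    ∑ i, ‖T (EuclideanSpace.single i 1)‖ ^ 2 ≤ r ^ 2 := by
  obtain ⟨ε, hε, hle⟩ :=
    exists_sign_sum_norm_sq_le_norm_sum_smul_sq (fun i => T (EuclideanSpace.single i 1)) univ
  have hTε : T (WithLp.toLp 2 ε) = ∑ i, ε i • T (EuclideanSpace.single i 1) := by
    conv_lhs => rw [← (EuclideanSpace.basisFun ι ℝ).sum_repr (WithLp.toLp 2 ε)]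
    simp
  calc _ ≤ _ := hle
    _ = ‖T (WithLp.toLp 2 ε)‖ ^ 2 := by rw [hTε]
    _ ≤ r ^ 2 := pow_le_pow_left₀ (norm_nonneg _) (hT _ fun i => (hε i).le) 2

theorem inner_adjoint_single_one [FiniteDimensional ℝ E] (S : E →ₗ[ℝ] EuclideanSpace ℝ ι)
    (i : ι) (y : E) : ⟪LinearMap.adjoint S (EuclideanSpace.single i 1), y⟫ = S y i := by
  rw [LinearMap.adjoint_inner_left, EuclideanSpace.inner_single_left]
  simp

end Cube

theorem LinearEquiv.norm_map_of_closedBall_subset_image_cube_subset_closedBall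
    {ι E : Type*} [Fintype ι] [NormedAddCommGroup E] [InnerProductSpace ℝ E]
    [FiniteDimensional ℝ E] (T : EuclideanSpace ℝ ι ≃ₗ[ℝ] E)
    (h1 : closedBall 0 1 ⊆ T '' cube ι)
    (h2 : T '' cube ι ⊆ closedBall 0 √(Fintype.card ι)) (x : EuclideanSpace ℝ ι) :
    ‖T x‖ = ‖x‖ := by
  classical
  set v := fun i => T (EuclideanSpace.single i 1)
  set w := fun i => LinearMap.adjoint (T.symm : E →ₗ[ℝ] EuclideanSpace ℝ ι)
    (EuclideanSpace.single i 1)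
  have hvw : ∀ i j, ⟪w i, v j⟫ = if i = j then 1 else 0 := by
    simp [w, v, inner_adjoint_single_one]
  have hw : ∀ i, ‖w i‖ ≤ 1 := fun i => norm_le_one_of_forall_inner_le_one fun y hy => by
    obtain ⟨z, hz, rfl⟩ := h1 (mem_closedBall_zero_iff.2 hy)
    simpa [w, inner_adjoint_single_one] using (le_abs_self _).trans (hz i)
  have hv : ∑ i, ‖v i‖ ^ 2 ≤ Fintype.card ι := by
    simpa using sum_norm_sq_map_single_le_sq T.toLinearMap
      fun x hx => mem_closedBall_zero_iff.1 (h2 ⟨x, hx, rfl⟩)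
  have hTb : Orthonormal ℝ (T ∘ EuclideanSpace.basisFun ι ℝ) := by
    convert orthonormal_of_inner_eq_ite_of_sum_norm_sq_le_card hvw hw hv
    funext i
    simp [v]
  rw [← T.coe_isometryOfOrthonormal (v := (EuclideanSpace.basisFun ι ℝ).toBasis) (by simp) hTb]
  exact LinearIsometryEquiv.norm_map _ x

theorem cube_john_position_rigidity_general
    (T : EuclideanSpace ℝ (Fin 3) ≃ₗ[ℝ] EuclideanSpace ℝ (Fin 3))
    (h1 : Metric.closedBall 0 1 ⊆ T '' {x : EuclideanSpace ℝ (Fin 3) | ∀ i, |x i| ≤ 1})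
    (h2 : T '' {x : EuclideanSpace ℝ (Fin 3) | ∀ i, |x i| ≤ 1} ⊆
      Metric.closedBall 0 (Real.sqrt 3)) :
    ∀ x, ‖T x‖ = ‖x‖ :=
  T.norm_map_of_closedBall_subset_image_cube_subset_closedBall h1 (by simpa [cube] using h2)

/-- Rigidity of the John position of the cube: if `T ∈ GL(3)` satisfies
`B₂³ ⊆ T(B∞³) ⊆ √3 B₂³`, then `T` is an orthogonal transformation. -/
theorem cube_john_position_rigidity (K : Set (EuclideanSpace ℝ (Fin 3)))
    (hKcomp : IsCompact K) (hKconv : Convex ℝ K) (hKsymm : K = -K)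
    (hKint : (interior K).Nonempty)
    (T : EuclideanSpace ℝ (Fin 3) ≃ₗ[ℝ] EuclideanSpace ℝ (Fin 3))
    (h1 : Metric.closedBall 0 1 ⊆ T '' {x : EuclideanSpace ℝ (Fin 3) | ∀ i, |x i| ≤ 1})
    (h2 : T '' {x : EuclideanSpace ℝ (Fin 3) | ∀ i, |x i| ≤ 1} ⊆
      Metric.closedBall 0 (Real.sqrt 3)) :
    ∀ x, ‖T x‖ = ‖x‖ :=
  cube_john_position_rigidity_general T h1 h2
end
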